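/- For the type E_8 with exponents 1,7,11,13,17,19,23,29 and dimension 248, and for every hyperbolic triple (a,b,c), we have Σ_{k∈{a,b,c}} Σ_e (1 + 2⌊e/k⌋) < 248, where e runs over the exponents of E_8. -/

import Mathlib

/-! With `G k = ∑ₑ ⌊e / k⌋`, the left-hand side is `24 + 2 (G a + G b + G c)`, so the claim is
`G a + G b + G c ≤ 111`. `G` is antitone, and every hyperbolic triple dominates one of the
minimal ones `(2, 3, 7)`, `(2, 4, 5)`, `(3, 3, 4)`, where the sums are `106`, `102`, `98`. -/

theorem one_div_add_one_div_add_one_div_lt_one_iff {a b c : ℕ} (ha : 0 < a) (hb : 0 < b)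
    (hc : 0 < c) : (1 : ℚ) / a + 1 / b + 1 / c < 1 ↔ b * c + a * c + a * b < a * b * c := by
  have ha' : (a : ℚ) ≠ 0 := by positivity
  have hb' : (b : ℚ) ≠ 0 := by positivity
  have hc' : (c : ℚ) ≠ 0 := by positivity
  rw [div_add_div _ _ ha' hb', div_add_div _ _ (mul_ne_zero ha' hb') hc',
    div_lt_one (by positivity)]
  norm_cast
  ring_nf

theorem hyperbolic_triple_cases {a b c : ℕ} (ha : 0 < a) (hab : a ≤ b) (hbc : b ≤ c)
    (h : (1 : ℚ) / a + 1 / b + 1 / c < 1) :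
    (a = 2 ∧ b = 3 ∧ 7 ≤ c) ∨ (a = 2 ∧ 4 ≤ b ∧ 5 ≤ c) ∨ (3 ≤ a ∧ 3 ≤ b ∧ 4 ≤ c) := by
  rw [one_div_add_one_div_add_one_div_lt_one_iff ha (ha.trans_le hab)
    ((ha.trans_le hab).trans_le hbc)] at h
  rcases Nat.lt_or_ge a 3 with ha3 | ha3
  · interval_cases a
    · nlinarith
    · rcases Nat.lt_or_ge b 4 with hb4 | hb4
      · interval_cases b <;> omega
      · right; left; refine ⟨rfl, hb4, ?_⟩
        nlinarith
  · right; right; refine ⟨ha3, ha3.trans hab, ?_⟩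
    by_contra hc
    obtain ⟨rfl, rfl, rfl⟩ : a = 3 ∧ b = 3 ∧ c = 3 := by omega
    norm_num at h

theorem List.sum_map_div_le_of_le (l : List ℕ) {m k : ℕ} (hm : 0 < m) (hmk : m ≤ k) :
    (l.map (· / k)).sum ≤ (l.map (· / m)).sum :=
  List.sum_le_sum fun _ _ => Nat.div_le_div_left hmk hm

def e8FloorSum (k : ℕ) : ℕ := (([1, 7, 11, 13, 17, 19, 23, 29] : List ℕ).map (· / k)).sum

theorem e8FloorSum_antitone {m k : ℕ} (hm : 0 < m) (hmk : m ≤ k) : e8FloorSum k ≤ e8FloorSum m :=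
  List.sum_map_div_le_of_le _ hm hmk

theorem e8FloorSum_hyperbolic_le {a b c : ℕ} (ha : 0 < a) (hab : a ≤ b) (hbc : b ≤ c)
    (h : (1 : ℚ) / a + 1 / b + 1 / c < 1) : e8FloorSum a + e8FloorSum b + e8FloorSum c ≤ 111 := by
  have h2 : e8FloorSum 2 = 56 := by decide
  have h3 : e8FloorSum 3 = 36 := by decide
  have h4 : e8FloorSum 4 = 26 := by decide
  have h5 : e8FloorSum 5 = 20 := by decide
  have h7 : e8FloorSum 7 = 14 := by decide
  rcases hyperbolic_triple_cases ha hab hbc h with ⟨rfl, rfl, hc⟩ | ⟨rfl, hb, hc⟩ | ⟨ha, hb, hc⟩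
  · have := e8FloorSum_antitone (by norm_num) hc
    omega
  · have := e8FloorSum_antitone (by norm_num) hb
    have := e8FloorSum_antitone (by norm_num) hc
    omega
  · have := e8FloorSum_antitone (by norm_num) ha
    have := e8FloorSum_antitone (by norm_num) hb
    have := e8FloorSum_antitone (by norm_num) hc
    omega

theorem typeE8_inequality (a b c : ℕ) (ha : 0 < a) (hab : a ≤ b) (hbc : b ≤ c)
    (hhyp : (1 : ℚ)/a + 1/b + 1/c < 1) :
    (([1, 7, 11, 13, 17, 19, 23, 29] : List ℕ).map
        (fun e => (1 + 2 * (e / a)) + (1 + 2 * (e / b)) + (1 + 2 * (e / c)))).sum < 248 := by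
  have hfloor := e8FloorSum_hyperbolic_le ha hab hbc hhyp
  simp only [e8FloorSum, List.map_cons, List.map_nil, List.sum_cons, List.sum_nil] at hfloor ⊢
  omega
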